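/- arXiv:2507.11452 — 5 statements merged into one kernel-verified Lean document; each statement's English description precedes it below -/
import Mathlib

section
/- Let H be a finite-dimensional complex inner product space of dimension N, let F = {f_i}_{i=1}^M be a frame for H (i.e., the f_i span H), with frame operator S defined by S f = ∑_{i=1}^M ⟨f, f_i⟩ f_i (which is then positive and invertible), and let {q_i}_{i=1}^M be positive real weights. Set c² = max_{1 ≤ i ≤ M} q_i ⟨f_i, S⁻¹ f_i⟩, let Λ₁ = { i : q_i ⟨f_i, S⁻¹ f_i⟩ = c² } and Λ₂ = {1,…,M} \ Λ₁, and let H₁ = span{f_i : i ∈ Λ₁}, H₂ = span{f_i : i ∈ Λ₂}. If H₁ ∩ H₂ = {0}, then for every dual frame G = {g_i}_{i=1}^M of F (i.e., ∑_{i=1}^M ⟨f, f_i⟩ g_i = f for all f ∈ H), one has max_{1 ≤ i ≤ M} q_i |⟨f_i, g_i⟩| ≥ c². In other words, the canonical dual {S⁻¹ f_i}_{i=1}^M is a 1-erasure probability optimal dual of F. -/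
/-!
For a dual `G`, the differences `u_i = g_i - S⁻¹ f_i` satisfy `∑ ⟨f, f_i⟩ u_i = 0`, and taking
adjoints `∑ ⟨h, u_i⟩ f_i = 0` for all `h`. Because `H₁ ∩ H₂ = {0}`, the part of this sum over `Λ₁`
vanishes on its own, so its trace `∑_{i ∈ Λ₁} ⟨f_i, u_i⟩` is zero: every dual has the same
`∑_{i ∈ Λ₁} ⟨f_i, g_i⟩` as the canonical one, which is `∑_{i ∈ Λ₁} c² / q_i`. Hence some
`i ∈ Λ₁` has `Re ⟨f_i, g_i⟩ ≥ c² / q_i`, i.e. `q_i |⟨f_i, g_i⟩| ≥ c²`.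
-/

open Finset

theorem Submodule.sum_eq_zero_of_disjoint {R M ι : Type*} [Ring R] [AddCommGroup M] [Module R M]
    [Fintype ι] [DecidableEq ι] {V W : Submodule R M} (hVW : Disjoint V W) {s : Finset ι}
    {x : ι → M} (hV : ∀ i ∈ s, x i ∈ V) (hW : ∀ i ∉ s, x i ∈ W)
    (hx : ∑ i, x i = 0) :
    ∑ i ∈ s, x i = 0 := by
  have hsplit : ∑ i ∈ s, x i = -∑ i ∈ sᶜ, x i :=
    eq_neg_of_add_eq_zero_left ((sum_add_sum_compl s x).trans hx)
  refine Submodule.disjoint_def.mp hVW _ (sum_mem hV) ?_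
  rw [hsplit]
  exact neg_mem (sum_mem fun i hi => hW i (mem_compl.mp hi))

section Frames

variable {𝕜 E ι : Type*} [RCLike 𝕜] [NormedAddCommGroup E] [InnerProductSpace 𝕜 E]

def IsDualFrame [Fintype ι] (F G : ι → E) : Prop :=
  ∀ f : E, ∑ i, inner 𝕜 (F i) f • G i = f

theorem isDualFrame_canonical [Fintype ι] (F : ι → E) {S : E ≃ₗ[𝕜] E}
    (hS : ∀ f, S f = ∑ i, inner 𝕜 (F i) f • F i) :
    IsDualFrame (𝕜 := 𝕜) F (fun i => S.symm (F i)) := fun f => by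
  simpa only [map_sum, map_smul, S.symm_apply_apply] using (congrArg S.symm (hS f)).symm

theorem sum_inner_smul_eq_zero_symm [Fintype ι] {F u : ι → E}
    (hFu : ∀ f, ∑ i, inner 𝕜 (F i) f • u i = 0) (h : E) :
    ∑ i, inner 𝕜 (u i) h • F i = 0 := by
  refine ext_inner_right 𝕜 fun f => ?_
  have hzero := congrArg (inner 𝕜 h) (hFu f)
  simp only [inner_sum, inner_smul_right, inner_zero_right] at hzero
  simp only [sum_inner, inner_smul_left, inner_conj_symm, inner_zero_left]
  simpa only [mul_comm] using hzero

/-- The rank-one sum `h ↦ ∑ i ∈ s, ⟪u i, h⟫ • v i` has trace `∑ i ∈ s, ⟪u i, v i⟫`. -/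
theorem sum_inner_eq_zero_of_sum_inner_smul_eq_zero [FiniteDimensional 𝕜 E] {s : Finset ι}
    {u v : ι → E} (huv : ∀ h, ∑ i ∈ s, inner 𝕜 (u i) h • v i = 0) :
    ∑ i ∈ s, inner 𝕜 (u i) (v i) = 0 := by
  let b := stdOrthonormalBasis 𝕜 E
  simp_rw [← b.sum_inner_mul_inner (u _) (v _)]
  rw [sum_comm]
  refine sum_eq_zero fun k _ => ?_
  have hzero := congrArg (inner 𝕜 (b k)) (huv (b k))
  simp only [inner_sum, inner_smul_right, inner_zero_right] at hzero
  simpa only [mul_comm] using hzero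

theorem IsDualFrame.sum_inner_eq [FiniteDimensional 𝕜 E] [Fintype ι] {F G₁ G₂ : ι → E}
    (hG₁ : IsDualFrame (𝕜 := 𝕜) F G₁) (hG₂ : IsDualFrame (𝕜 := 𝕜) F G₂) {s : Finset ι}
    (hs : Disjoint (Submodule.span 𝕜 (F '' s)) (Submodule.span 𝕜 (F '' (↑s)ᶜ))) :
    ∑ i ∈ s, inner 𝕜 (G₁ i) (F i) = ∑ i ∈ s, inner 𝕜 (G₂ i) (F i) := by
  classical
  have hdiff : ∀ f, ∑ i, inner 𝕜 (F i) f • (G₁ i - G₂ i) = 0 := fun f => by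
    simp only [smul_sub, sum_sub_distrib, hG₁ f, hG₂ f, sub_self]
  have hsplit (h : E) : ∑ i ∈ s, inner 𝕜 (G₁ i - G₂ i) h • F i = 0 :=
    Submodule.sum_eq_zero_of_disjoint hs
      (fun i hi => Submodule.smul_mem _ _ (Submodule.subset_span ⟨i, hi, rfl⟩))
      (fun i hi => Submodule.smul_mem _ _ (Submodule.subset_span ⟨i, hi, rfl⟩))
      (sum_inner_smul_eq_zero_symm hdiff h)
  have htrace := sum_inner_eq_zero_of_sum_inner_smul_eq_zero hsplit
  simpa only [inner_sub_left, sum_sub_distrib, sub_eq_zero] using htrace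

end Frames

theorem canonical_dual_prob_optimal_of_trivial_intersection_general
    {H : Type*} [NormedAddCommGroup H] [InnerProductSpace ℂ H] [FiniteDimensional ℂ H]
    {M : ℕ} (hM : 0 < M)
    (F : Fin M → H)
    (S : H ≃ₗ[ℂ] H) (hS : ∀ f : H, S f = ∑ i, (inner ℂ (F i) f : ℂ) • F i)
    (q : Fin M → ℝ) (hq : ∀ i, 0 < q i)
    (c2 : ℝ) (hc2 : c2 = ⨆ i, q i * (inner ℂ (S.symm (F i)) (F i) : ℂ).re)
    (Λ₁ : Set (Fin M))
    (hΛ₁ : Λ₁ = {i | q i * (inner ℂ (S.symm (F i)) (F i) : ℂ).re = c2})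
    (H₁ H₂ : Submodule ℂ H)
    (hH₁ : H₁ = Submodule.span ℂ (F '' Λ₁))
    (hH₂ : H₂ = Submodule.span ℂ (F '' Λ₁ᶜ))
    (hint : H₁ ⊓ H₂ = ⊥)
    (G : Fin M → H) (hG : ∀ f : H, ∑ i, (inner ℂ (F i) f : ℂ) • G i = f) :
    c2 ≤ ⨆ i, q i * ‖(inner ℂ (G i) (F i) : ℂ)‖ := by
  classical
  have : Nonempty (Fin M) := ⟨⟨0, hM⟩⟩
  obtain ⟨i₀, hi₀⟩ :=
    exists_eq_ciSup_of_finite (f := fun i => q i * (inner ℂ (S.symm (F i)) (F i)).re)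
  have hΛ₁_nonempty : Λ₁.toFinset.Nonempty := ⟨i₀, by simp [hΛ₁, hc2, hi₀]⟩
  have htrace := (isDualFrame_canonical F hS).sum_inner_eq (G₂ := G) hG (s := Λ₁.toFinset)
    (by simpa only [Set.coe_toFinset, disjoint_iff, ← hH₁, ← hH₂] using hint)
  obtain ⟨i, hi, hle⟩ := exists_le_of_sum_le hΛ₁_nonempty
    (by simpa only [Complex.re_sum] using (congrArg Complex.re htrace).le)
  calc c2
    _ = q i * (inner ℂ (S.symm (F i)) (F i)).re := by simpa [hΛ₁, eq_comm] using hi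
    _ ≤ q i * (inner ℂ (G i) (F i)).re := by gcongr; exact (hq i).le
    _ ≤ q i * ‖(inner ℂ (G i) (F i) : ℂ)‖ := by gcongr; exacts [(hq i).le, Complex.re_le_norm _]
    _ ≤ ⨆ i, q i * ‖(inner ℂ (G i) (F i) : ℂ)‖ :=
      le_ciSup (f := fun j => q j * ‖(inner ℂ (G j) (F j) : ℂ)‖) (Finite.bddAbove_range _) i

/-- corrected Theorem 1: Let `F = {f_i}_{i=1}^M` be a frame for an
`N`-dimensional complex inner product space `H` with frame operator `S` (a linear
automorphism with `S f = ∑ i, ⟨f, f_i⟩ f_i`), and let `{q_i}` be positive weights.  With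
`c² = max_i q_i ⟨f_i, S⁻¹ f_i⟩`, `Λ₁ = {i : q_i ⟨f_i, S⁻¹ f_i⟩ = c²}`, `Λ₂` its
complement, and `H_j = span{f_i : i ∈ Λ_j}`: if `H₁ ⊓ H₂ = {0}`, then every dual `G` of
`F` satisfies `max_i q_i |⟨f_i, g_i⟩| ≥ c²`; i.e. the canonical dual is a 1-erasure
probability optimal dual.  The paper's inner product `⟨a, b⟩` (linear in the first
argument) is Mathlib's `⟪b, a⟫_ℂ`; note `⟨f_i, S⁻¹ f_i⟩ = ‖S^{-1/2} f_i‖²` is a positive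
real, realized here as the real part. -/
theorem canonical_dual_prob_optimal_of_trivial_intersection
    {H : Type*} [NormedAddCommGroup H] [InnerProductSpace ℂ H] [FiniteDimensional ℂ H]
    {N M : ℕ} (hM : 0 < M) (hN : Module.finrank ℂ H = N)
    (F : Fin M → H) (hF : Submodule.span ℂ (Set.range F) = ⊤)
    (S : H ≃ₗ[ℂ] H) (hS : ∀ f : H, S f = ∑ i, (inner ℂ (F i) f : ℂ) • F i)
    (q : Fin M → ℝ) (hq : ∀ i, 0 < q i)
    (c2 : ℝ) (hc2 : c2 = ⨆ i, q i * (inner ℂ (S.symm (F i)) (F i) : ℂ).re)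
    (Λ₁ : Set (Fin M))
    (hΛ₁ : Λ₁ = {i | q i * (inner ℂ (S.symm (F i)) (F i) : ℂ).re = c2})
    (H₁ H₂ : Submodule ℂ H)
    (hH₁ : H₁ = Submodule.span ℂ (F '' Λ₁))
    (hH₂ : H₂ = Submodule.span ℂ (F '' Λ₁ᶜ))
    (hint : H₁ ⊓ H₂ = ⊥)
    (G : Fin M → H) (hG : ∀ f : H, ∑ i, (inner ℂ (F i) f : ℂ) • G i = f) :
    c2 ≤ ⨆ i, q i * ‖(inner ℂ (G i) (F i) : ℂ)‖ :=
  canonical_dual_prob_optimal_of_trivial_intersection_general hM F S hS q hq c2 hc2 Λ₁ hΛ₁ H₁ H₂ hH₁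
    hH₂ hint G hG
end

section
/- Let H be a complex inner product space of finite dimension N, let F = {f_i}_{i=1}^M be a frame for H, and let {q_i}_{i=1}^M be positive real weights with ∑_{i=1}^M 1/q_i = N. Then for every dual G = {g_i}_{i=1}^M of F, max_{1 ≤ i ≤ M} q_i |⟨f_i, g_i⟩| ≥ 1. -/
/-!
The operator `f ↦ ∑ i, ⟪F i, f⟫ • G i` is the identity and a sum of rank-one operators, so taking
traces gives `∑ i, ⟪F i, G i⟫ = N`. Hence `N ≤ ∑ i, ‖⟪G i, F i⟫‖ ≤ (∑ i, 1 / q i) * S = N * S`,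
where `S` is the weighted maximum, and `N > 0` because `M > 0` and the weights are positive.
-/

open scoped InnerProductSpace

section DualFamily

variable (𝕜 : Type*) {E ι : Type*} [RCLike 𝕜] [NormedAddCommGroup E] [InnerProductSpace 𝕜 E]
  [Fintype ι]

def IsDualFamily (F G : ι → E) : Prop := ∀ f : E, ∑ i, ⟪F i, f⟫_𝕜 • G i = f

variable {𝕜}

theorem IsDualFamily.sum_inner_eq_finrank [FiniteDimensional 𝕜 E] {F G : ι → E}
    (hG : IsDualFamily 𝕜 F G) : ∑ i, ⟪F i, G i⟫_𝕜 = Module.finrank 𝕜 E := by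
  have hid : ((∑ i, InnerProductSpace.rankOne 𝕜 (G i) (F i) : E →L[𝕜] E) : E →ₗ[𝕜] E) =
      LinearMap.id := by
    ext f
    simpa using hG f
  simpa [map_sum, InnerProductSpace.trace_rankOne] using congrArg (LinearMap.trace 𝕜 E) hid

end DualFamily

theorem sum_le_sum_one_div_mul_iSup_mul {ι : Type*} [Fintype ι] {q : ι → ℝ} (hq : ∀ i, 0 < q i)
    (a : ι → ℝ) : ∑ i, a i ≤ (∑ i, 1 / q i) * ⨆ i, q i * a i := by
  rw [Finset.sum_mul]
  refine Finset.sum_le_sum fun i _ => ?_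
  rw [div_mul_eq_mul_div, one_mul, le_div_iff₀ (hq i), mul_comm]
  exact le_ciSup (Set.finite_range fun i => q i * a i).bddAbove i

theorem one_le_max_weighted_diag_inner_general
    {H : Type*} [NormedAddCommGroup H] [InnerProductSpace ℂ H] [FiniteDimensional ℂ H]
    {N M : ℕ} (hM : 0 < M) (hN : Module.finrank ℂ H = N)
    (F : Fin M → H)
    (q : Fin M → ℝ) (hq : ∀ i, 0 < q i) (hqsum : ∑ i, 1 / q i = (N : ℝ))
    (G : Fin M → H) (hG : ∀ f : H, ∑ i, (inner ℂ (F i) f : ℂ) • G i = f) :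
    1 ≤ ⨆ i, q i * ‖(inner ℂ (G i) (F i) : ℂ)‖ := by
  have hN_pos : (0 : ℝ) < N :=
    hqsum ▸ Finset.sum_pos (fun i _ => one_div_pos.mpr (hq i)) ⟨⟨0, hM⟩, Finset.mem_univ _⟩
  have htrace : ∑ i, ⟪F i, G i⟫_ℂ = N := hN ▸ IsDualFamily.sum_inner_eq_finrank (𝕜 := ℂ) hG
  refine le_of_mul_le_mul_left ?_ hN_pos
  calc (N : ℝ) * 1 = ‖∑ i, ⟪F i, G i⟫_ℂ‖ := by simp [htrace]
    _ ≤ ∑ i, ‖⟪G i, F i⟫_ℂ‖ := by simpa only [norm_inner_symm] using norm_sum_le _ _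
    _ ≤ N * ⨆ i, q i * ‖⟪G i, F i⟫_ℂ‖ := hqsum ▸ sum_le_sum_one_div_mul_iSup_mul hq _

/-- If `F = {f_i}_{i=1}^M` is a frame for an `N`-dimensional complex inner
product space and `{q_i}` are positive weights with `∑ 1/q_i = N`, then every dual `G` of
`F` satisfies `max_i q_i |⟨f_i, g_i⟩| ≥ 1`.  The paper's inner product `⟨a, b⟩` is
Mathlib's `⟪b, a⟫_ℂ`. -/
theorem one_le_max_weighted_diag_inner
    {H : Type*} [NormedAddCommGroup H] [InnerProductSpace ℂ H] [FiniteDimensional ℂ H]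
    {N M : ℕ} (hM : 0 < M) (hN : Module.finrank ℂ H = N)
    (F : Fin M → H) (hF : Submodule.span ℂ (Set.range F) = ⊤)
    (q : Fin M → ℝ) (hq : ∀ i, 0 < q i) (hqsum : ∑ i, 1 / q i = (N : ℝ))
    (G : Fin M → H) (hG : ∀ f : H, ∑ i, (inner ℂ (F i) f : ℂ) • G i = f) :
    1 ≤ ⨆ i, q i * ‖(inner ℂ (G i) (F i) : ℂ)‖ :=
  one_le_max_weighted_diag_inner_general hM hN F q hq hqsum G hG
end

section
/- Let H be a complex inner product space of finite dimension N, let F = {f_i}_{i=1}^M be a frame for H, let {q_i}_{i=1}^M be positive real weights with ∑_{i=1}^M 1/q_i = N, and let G = {g_i}_{i=1}^M be a dual of F such that q_i |⟨f_i, g_i⟩| ≤ 1 for every i (i.e., r₁^q(F,G) = 1, the minimal possible value). Then for every i ∈ {1,…,M}, ⟨f_i, g_i⟩ is a nonnegative real number and q_i ⟨f_i, g_i⟩ = 1. -/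
/-! The operator identity `∑ i, ⟪f_i, ·⟫ g_i = id` has trace `∑ i, ⟪f_i, g_i⟫ = N`, so the numbers
`⟪g_i, f_i⟫` have real parts summing to `N = ∑ i, 1 / q_i`. Since
`Re ⟪g_i, f_i⟫ ≤ ‖⟪g_i, f_i⟫‖ ≤ 1 / q_i` termwise, every inequality in this chain is an equality,
which forces `⟪g_i, f_i⟫ = 1 / q_i`. -/

open scoped InnerProductSpace

theorem sum_inner_eq_finrank_of_dual {𝕜 E ι : Type*} [RCLike 𝕜] [NormedAddCommGroup E]
    [InnerProductSpace 𝕜 E] [FiniteDimensional 𝕜 E] [Fintype ι] (F G : ι → E)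
    (hG : ∀ f : E, ∑ i, ⟪F i, f⟫_𝕜 • G i = f) :
    ∑ i, ⟪F i, G i⟫_𝕜 = Module.finrank 𝕜 E := by
  have hid : ∑ i, (InnerProductSpace.rankOne 𝕜 (G i) (F i) : E →ₗ[𝕜] E) = LinearMap.id :=
    LinearMap.ext fun f ↦ by simpa using hG f
  have := congrArg (LinearMap.trace 𝕜 E) hid
  simpa [map_sum, InnerProductSpace.trace_rankOne] using this

theorem Complex.eq_ofReal_of_norm_le_of_le_re {z : ℂ} {r : ℝ} (hnorm : ‖z‖ ≤ r) (hre : r ≤ z.re) :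
    z = r := by
  have hre_eq : z.re = r := le_antisymm ((re_le_norm z).trans hnorm) hre
  have him : z.im = 0 :=
    (re_eq_norm.1 (le_antisymm (re_le_norm z) (hnorm.trans hre))).2.symm
  exact Complex.ext (by simpa using hre_eq) (by simpa using him)

theorem Complex.eq_ofReal_of_norm_le_of_sum_le_sum_re {ι : Type*} [Fintype ι] {a : ι → ℂ}
    {r : ι → ℝ} (hnorm : ∀ i, ‖a i‖ ≤ r i) (hsum : ∑ i, r i ≤ ∑ i, (a i).re) (i : ι) :
    a i = r i := by
  have hle : ∀ i ∈ Finset.univ, (a i).re ≤ r i := fun i _ ↦ (re_le_norm _).trans (hnorm i)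
  have hre : (a i).re = r i :=
    (Finset.sum_eq_sum_iff_of_le hle).1 ((Finset.sum_le_sum hle).antisymm hsum) i
      (Finset.mem_univ i)
  exact eq_ofReal_of_norm_le_of_le_re (hnorm i) hre.ge

theorem optimal_dual_diag_inner_eq_inv_weight_general
    {H : Type*} [NormedAddCommGroup H] [InnerProductSpace ℂ H] [FiniteDimensional ℂ H]
    {N M : ℕ} (hN : Module.finrank ℂ H = N)
    (F : Fin M → H)
    (q : Fin M → ℝ) (hq : ∀ i, 0 < q i) (hqsum : ∑ i, 1 / q i = (N : ℝ))
    (G : Fin M → H) (hG : ∀ f : H, ∑ i, (inner ℂ (F i) f : ℂ) • G i = f)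
    (hopt : ∀ i, q i * ‖(inner ℂ (G i) (F i) : ℂ)‖ ≤ 1) :
    ∀ i, (inner ℂ (G i) (F i) : ℂ).im = 0 ∧ 0 ≤ (inner ℂ (G i) (F i) : ℂ).re ∧
      (q i : ℂ) * (inner ℂ (G i) (F i) : ℂ) = 1 := by
  have hnorm : ∀ i, ‖⟪G i, F i⟫_ℂ‖ ≤ 1 / q i := fun i ↦
    (le_div_iff₀ (hq i)).2 (by rw [mul_comm]; exact hopt i)
  have hsum : ∑ i, (⟪G i, F i⟫_ℂ).re = N := by
    have htrace := congrArg (fun z ↦ (starRingEnd ℂ z).re) (sum_inner_eq_finrank_of_dual F G hG)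
    simpa [hN, Complex.re_sum] using htrace
  intro i
  have hi : ⟪G i, F i⟫_ℂ = (1 / q i : ℝ) :=
    Complex.eq_ofReal_of_norm_le_of_sum_le_sum_re hnorm (by rw [hqsum, hsum]) i
  refine ⟨by simp [hi], by simp [hi, (hq i).le], ?_⟩
  rw [hi, Complex.ofReal_div, Complex.ofReal_one, mul_one_div_cancel]
  exact_mod_cast (hq i).ne'

/-- If `F` is a frame for an `N`-dimensional complex inner product space,
`{q_i}` are positive weights with `∑ 1/q_i = N`, and `G` is a dual of `F` with
`q_i |⟨f_i, g_i⟩| ≤ 1` for all `i` (i.e. `r₁^q(F,G) = 1`, the minimal possible value),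
then each `⟨f_i, g_i⟩` is a nonnegative real and `q_i ⟨f_i, g_i⟩ = 1`.
The paper's inner product `⟨a, b⟩` is Mathlib's `⟪b, a⟫_ℂ`. -/
theorem optimal_dual_diag_inner_eq_inv_weight
    {H : Type*} [NormedAddCommGroup H] [InnerProductSpace ℂ H] [FiniteDimensional ℂ H]
    {N M : ℕ} (hN : Module.finrank ℂ H = N)
    (F : Fin M → H) (hF : Submodule.span ℂ (Set.range F) = ⊤)
    (q : Fin M → ℝ) (hq : ∀ i, 0 < q i) (hqsum : ∑ i, 1 / q i = (N : ℝ))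
    (G : Fin M → H) (hG : ∀ f : H, ∑ i, (inner ℂ (F i) f : ℂ) • G i = f)
    (hopt : ∀ i, q i * ‖(inner ℂ (G i) (F i) : ℂ)‖ ≤ 1) :
    ∀ i, (inner ℂ (G i) (F i) : ℂ).im = 0 ∧ 0 ≤ (inner ℂ (G i) (F i) : ℂ).re ∧
      (q i : ℂ) * (inner ℂ (G i) (F i) : ℂ) = 1 :=
  optimal_dual_diag_inner_eq_inv_weight_general hN F q hq hqsum G hG hopt
end

section
/- In ℂ², let F = {f₁,f₂,f₃,f₄} = {(1,0), (0,1), (1,1), (1,−1)} with weights q = (3, 3, 3/2, 3/2). Then every dual G = {g_i}_{i=1}^4 of F satisfies max_{1 ≤ i ≤ 4} q_i |⟨f_i, g_i⟩| ≥ 1, and the canonical dual {f_i/3} = {(1/3,0), (0,1/3), (1/3,1/3), (1/3,−1/3)} is a dual of F achieving max_{1 ≤ i ≤ 4} q_i |⟨f_i, f_i/3⟩| = 1; hence the canonical dual is a 1-erasure probability optimal dual of F. -/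
noncomputable def tfFrame : Fin 4 → EuclideanSpace ℂ (Fin 2) :=
  ![(WithLp.equiv 2 (Fin 2 → ℂ)).symm ![1, 0],
    (WithLp.equiv 2 (Fin 2 → ℂ)).symm ![0, 1],
    (WithLp.equiv 2 (Fin 2 → ℂ)).symm ![1, 1],
    (WithLp.equiv 2 (Fin 2 → ℂ)).symm ![1, -1]]

noncomputable def tfWeights : Fin 4 → ℝ := ![3, 3, 3/2, 3/2]

/-! For any dual `G`, the operator `x ↦ ∑ ⟪f i, x⟫ • g i` is the identity, so its trace gives
`∑ ⟪f i, g i⟫ = dim H`. Hence `dim H ≤ ∑ |⟪f i, g i⟫| ≤ (∑ 1/q i) · max_i q i |⟪f i, g i⟫|`, and here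
`∑ 1/q i = 2 = dim ℂ²`. The frame is tight with bound `3` and `q i ‖f i‖² = 3` for every `i`, so the
canonical dual `f i / 3` attains the bound. -/

open Module
open scoped InnerProductSpace

section Dual

variable {𝕜 E ι : Type*} [RCLike 𝕜] [NormedAddCommGroup E] [InnerProductSpace 𝕜 E] [Fintype ι]

theorem sum_inner_eq_finrank_of_dual_s14 [FiniteDimensional 𝕜 E] {f g : ι → E}
    (hdual : ∀ x, ∑ i, ⟪f i, x⟫_𝕜 • g i = x) :
    ∑ i, ⟪f i, g i⟫_𝕜 = finrank 𝕜 E := by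
  have hid : ∑ i, (innerₛₗ 𝕜 (f i)).smulRight (g i) = LinearMap.id := by
    ext x
    simpa using hdual x
  simpa [LinearMap.trace_smulRight] using congrArg (LinearMap.trace 𝕜 E) hid

theorem norm_sum_le_sum_inv_mul_iSup {q : ι → ℝ} (hq : ∀ i, 0 < q i) (c : ι → 𝕜) :
    ‖∑ i, c i‖ ≤ (∑ i, (q i)⁻¹) * ⨆ i, q i * ‖c i‖ := by
  calc ‖∑ i, c i‖ ≤ ∑ i, ‖c i‖ := norm_sum_le _ _
    _ = ∑ i, (q i)⁻¹ * (q i * ‖c i‖) := by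
        congr! 1 with i
        rw [inv_mul_cancel_left₀ (hq i).ne']
    _ ≤ ∑ i, (q i)⁻¹ * ⨆ j, q j * ‖c j‖ := by
        gcongr with i
        · exact (inv_pos.2 (hq i)).le
        · exact le_ciSup (f := fun j => q j * ‖c j‖) (Set.finite_range _).bddAbove i
    _ = (∑ i, (q i)⁻¹) * ⨆ i, q i * ‖c i‖ := (Finset.sum_mul _ _ _).symm

theorem finrank_le_sum_inv_mul_iSup_of_dual [FiniteDimensional 𝕜 E] {f g : ι → E}
    (hdual : ∀ x, ∑ i, ⟪f i, x⟫_𝕜 • g i = x) {q : ι → ℝ} (hq : ∀ i, 0 < q i) :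
    (finrank 𝕜 E : ℝ) ≤ (∑ i, (q i)⁻¹) * ⨆ i, q i * ‖⟪g i, f i⟫_𝕜‖ := by
  calc (finrank 𝕜 E : ℝ) = ‖∑ i, ⟪f i, g i⟫_𝕜‖ := by
        rw [sum_inner_eq_finrank_of_dual_s14 hdual, RCLike.norm_natCast]
    _ ≤ (∑ i, (q i)⁻¹) * ⨆ i, q i * ‖⟪f i, g i⟫_𝕜‖ := norm_sum_le_sum_inv_mul_iSup hq _
    _ = (∑ i, (q i)⁻¹) * ⨆ i, q i * ‖⟪g i, f i⟫_𝕜‖ := by simp_rw [norm_inner_symm]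

theorem sum_inner_smul_inv_smul_of_tight {f : ι → E} {A : 𝕜} (hA : A ≠ 0)
    (htight : ∀ x, ∑ i, ⟪f i, x⟫_𝕜 • f i = A • x) (x : E) :
    ∑ i, ⟪f i, x⟫_𝕜 • (A⁻¹ • f i) = x := by
  simp_rw [smul_comm _ A⁻¹, ← Finset.smul_sum, htight, inv_smul_smul₀ hA]

end Dual

theorem tfFrame_sum_inner_smul (x : EuclideanSpace ℂ (Fin 2)) :
    ∑ i, ⟪tfFrame i, x⟫_ℂ • tfFrame i = (3 : ℂ) • x := by
  ext j
  fin_cases j <;> simp [tfFrame, Fin.sum_univ_four, PiLp.inner_apply, Fin.sum_univ_two] <;> ring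

theorem tfWeights_pos (i : Fin 4) : 0 < tfWeights i := by
  fin_cases i <;> norm_num [tfWeights]

theorem sum_inv_tfWeights : ∑ i, (tfWeights i)⁻¹ = 2 := by
  simp [tfWeights, Fin.sum_univ_four]
  norm_num

theorem tfWeights_mul_norm_tfFrame_sq (i : Fin 4) : tfWeights i * ‖tfFrame i‖ ^ 2 = 3 := by
  fin_cases i <;> norm_num [tfFrame, tfWeights, EuclideanSpace.norm_sq_eq, Fin.sum_univ_two]

/-- The paper's inner product `⟨a, b⟩` is Mathlib's `⟪b, a⟫_ℂ`. -/
theorem tfFrame_canonical_dual_optimal :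
    (∀ G : Fin 4 → EuclideanSpace ℂ (Fin 2),
      (∀ f : EuclideanSpace ℂ (Fin 2), ∑ i, (inner ℂ (tfFrame i) f : ℂ) • G i = f) →
      1 ≤ ⨆ i, tfWeights i * ‖inner ℂ (G i) (tfFrame i)‖) ∧
    (∀ f : EuclideanSpace ℂ (Fin 2),
      ∑ i, (inner ℂ (tfFrame i) f : ℂ) • ((3 : ℂ)⁻¹ • tfFrame i) = f) ∧
    (⨆ i, tfWeights i * ‖inner ℂ ((3 : ℂ)⁻¹ • tfFrame i) (tfFrame i)‖) = 1 := by
  refine ⟨fun G hG => ?_, sum_inner_smul_inv_smul_of_tight three_ne_zero tfFrame_sum_inner_smul, ?_⟩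
  · have h := finrank_le_sum_inv_mul_iSup_of_dual hG tfWeights_pos
    rw [finrank_euclideanSpace_fin, sum_inv_tfWeights, Nat.cast_ofNat] at h
    linarith
  · have h (i : Fin 4) : tfWeights i * ‖⟪(3 : ℂ)⁻¹ • tfFrame i, tfFrame i⟫_ℂ‖ = 1 := by
      rw [inner_smul_left, inner_self_eq_norm_sq_to_K, norm_mul, norm_pow, RCLike.norm_conj,
        RCLike.norm_ofReal, abs_norm, norm_inv, RCLike.norm_ofNat]
      linear_combination tfWeights_mul_norm_tfFrame_sq i / 3
    simp_rw [h, ciSup_const]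
end

section
/- In ℂ², let F = {f₁,f₂,f₃,f₄} = {(1,0), (0,1), (1,1), (1,−1)} with weights q = (3, 3, 3/2, 3/2). A family G = {g_i}_{i=1}^4 in ℂ² is a dual of F satisfying max_{1 ≤ i ≤ 4} q_i |⟨f_i, g_i⟩| = 1 (i.e., G is a 1-erasure probability optimal dual of F) if and only if there exists w ∈ ℂ such that G = {(1/3, −2w), (2w, 1/3), (1/3 − w, 1/3 + w), (1/3 + w, −1/3 + w)}. In particular, the set of 1-erasure probability optimal duals of F is a one-complex-parameter family and is uncountable. -/
/-- The one-complex-parameter family of optimal duals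
`{(1/3, −2w), (2w, 1/3), (1/3 − w, 1/3 + w), (1/3 + w, −1/3 + w)}`. -/
noncomputable def tfOptDual (w : ℂ) : Fin 4 → EuclideanSpace ℂ (Fin 2) :=
  ![(WithLp.equiv 2 (Fin 2 → ℂ)).symm ![1/3, -2*w],
    (WithLp.equiv 2 (Fin 2 → ℂ)).symm ![2*w, 1/3],
    (WithLp.equiv 2 (Fin 2 → ℂ)).symm ![1/3 - w, 1/3 + w],
    (WithLp.equiv 2 (Fin 2 → ℂ)).symm ![1/3 + w, -(1/3) + w]]

private lemma tf_inner2 (x y : EuclideanSpace ℂ (Fin 2)) :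
    (inner ℂ x y : ℂ) = starRingEnd ℂ (x 0) * y 0 + starRingEnd ℂ (x 1) * y 1 := by
  simp [PiLp.inner_apply, Fin.sum_univ_two, RCLike.inner_apply]; ring

/-- If `|z| ≤ r` and `r ≤ re z` then `z = r`. -/
private lemma tf_eq_of_abs_le {z : ℂ} {r : ℝ} (h1 : ‖z‖ ≤ r) (h2 : r ≤ z.re) :
    z = (r : ℂ) := by
  have hre : z.re ≤ ‖z‖ := Complex.re_le_norm z
  have h3 : z.re = r := le_antisymm (hre.trans h1) h2
  have hsq : (‖z‖) ^ 2 = z.re ^ 2 + z.im ^ 2 := by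
    rw [Complex.sq_norm, Complex.normSq_apply]; ring
  have habs : ‖z‖ = r := le_antisymm h1 (h3 ▸ hre)
  rw [habs, h3] at hsq
  have him : z.im = 0 := by nlinarith [sq_nonneg z.im]
  apply Complex.ext <;> simp [h3, him]

/-- Each member of the family is a dual. -/
private lemma tf_dual (w : ℂ) (f : EuclideanSpace ℂ (Fin 2)) :
    ∑ i, (inner ℂ (tfFrame i) f : ℂ) • tfOptDual w i = f := by
  ext j
  simp only [Finset.sum_apply, Fin.sum_univ_four, Pi.smul_apply, tf_inner2, tfFrame, tfOptDual]
  fin_cases j <;> simp <;> ring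

/-- Each member of the family has all weighted diagonal inner products equal to `1`. -/
private lemma tf_const (w : ℂ) (i : Fin 4) :
    tfWeights i * ‖(inner ℂ (tfOptDual w i) (tfFrame i) : ℂ)‖ = 1 := by
  have h23 : |(2/3 : ℝ)| = 2/3 := abs_of_nonneg (by norm_num)
  fin_cases i <;> simp only [tfWeights, tfOptDual, tfFrame, tf_inner2] <;> simp
  · rw [show (((starRingEnd ℂ) 3)⁻¹ + ((starRingEnd ℂ) 3)⁻¹ : ℂ) = ((2/3:ℝ):ℂ) by
      simp [Complex.conj_ofNat]; norm_num, Complex.norm_real, Real.norm_eq_abs, h23]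
    norm_num
  · rw [show (((starRingEnd ℂ) 3)⁻¹ + ((starRingEnd ℂ) 3)⁻¹ : ℂ) = ((2/3:ℝ):ℂ) by
      simp [Complex.conj_ofNat]; norm_num, Complex.norm_real, Real.norm_eq_abs, h23]
    norm_num

/-- For the tight frame `F = {(1,0),(0,1),(1,1),(1,−1)}` of `ℂ²` with
weights `q = (3, 3, 3/2, 3/2)`, a family `G` is a dual of `F` with
`max_i q_i |⟨f_i, g_i⟩| = 1` (i.e. a 1-erasure probability optimal dual) if and only if
`G = {(1/3, −2w), (2w, 1/3), (1/3 − w, 1/3 + w), (1/3 + w, −1/3 + w)}` for some `w ∈ ℂ`;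
in particular the set of optimal duals is uncountable.  The paper's inner product
`⟨a, b⟩` is Mathlib's `⟪b, a⟫_ℂ`. -/
theorem tfFrame_optimal_duals_characterization :
    (∀ G : Fin 4 → EuclideanSpace ℂ (Fin 2),
      ((∀ f : EuclideanSpace ℂ (Fin 2), ∑ i, (inner ℂ (tfFrame i) f : ℂ) • G i = f) ∧
        (⨆ i, tfWeights i * ‖(inner ℂ (G i) (tfFrame i) : ℂ)‖) = 1)
      ↔ ∃ w : ℂ, G = tfOptDual w) ∧
    ¬ Set.Countable {G : Fin 4 → EuclideanSpace ℂ (Fin 2) |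
        (∀ f : EuclideanSpace ℂ (Fin 2), ∑ i, (inner ℂ (tfFrame i) f : ℂ) • G i = f) ∧
        (⨆ i, tfWeights i * ‖(inner ℂ (G i) (tfFrame i) : ℂ)‖) = 1} := by
  have key : ∀ G : Fin 4 → EuclideanSpace ℂ (Fin 2),
      ((∀ f : EuclideanSpace ℂ (Fin 2), ∑ i, (inner ℂ (tfFrame i) f : ℂ) • G i = f) ∧
        (⨆ i, tfWeights i * ‖(inner ℂ (G i) (tfFrame i) : ℂ)‖) = 1)
      ↔ ∃ w : ℂ, G = tfOptDual w := by
    intro G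
    constructor
    · rintro ⟨hdual, hsup⟩
      -- component equations from duality applied to the standard basis
      have e0 := hdual (EuclideanSpace.single 0 1)
      have e1 := hdual (EuclideanSpace.single 1 1)
      have E1 := congrArg (fun v : EuclideanSpace ℂ (Fin 2) => v 0) e0
      have E2 := congrArg (fun v : EuclideanSpace ℂ (Fin 2) => v 1) e0
      have E3 := congrArg (fun v : EuclideanSpace ℂ (Fin 2) => v 0) e1
      have E4 := congrArg (fun v : EuclideanSpace ℂ (Fin 2) => v 1) e1
      simp only [WithLp.ofLp_sum, Finset.sum_apply, Fin.sum_univ_four, PiLp.smul_apply, tf_inner2, tfFrame,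
        EuclideanSpace.single_apply] at E1 E2 E3 E4
      simp at E1 E2 E3 E4
      -- bounds from the supremum
      have hb : ∀ i, tfWeights i * ‖(inner ℂ (G i) (tfFrame i) : ℂ)‖ ≤ 1 := by
        intro i
        rw [← hsup]
        exact le_ciSup (f := fun j => tfWeights j * ‖(inner ℂ (G j) (tfFrame j) : ℂ)‖)
          (Set.Finite.bddAbove (Set.finite_range _)) i
      -- the four diagonal inner products in terms of components
      have hi0 : (inner ℂ (G 0) (tfFrame 0) : ℂ) = starRingEnd ℂ (G 0 0) := by
        simp [tf_inner2, tfFrame]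
      have hi1 : (inner ℂ (G 1) (tfFrame 1) : ℂ) = starRingEnd ℂ (G 1 1) := by
        simp [tf_inner2, tfFrame]
      have hi2 : (inner ℂ (G 2) (tfFrame 2) : ℂ) = starRingEnd ℂ (G 2 0 + G 2 1) := by
        simp [tf_inner2, tfFrame, map_add]
      have hi3 : (inner ℂ (G 3) (tfFrame 3) : ℂ) = starRingEnd ℂ (G 3 0 - G 3 1) := by
        simp [tf_inner2, tfFrame, map_sub]; ring
      -- absolute value bounds on the (unconjugated) diagonal values
      have hA0 : ‖(G 0 0)‖ ≤ 1/3 := by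
        have := hb 0; rw [hi0] at this
        simp only [Complex.norm_conj] at this
        simp [tfWeights] at this; linarith
      have hA1 : ‖(G 1 1)‖ ≤ 1/3 := by
        have := hb 1; rw [hi1] at this
        simp only [Complex.norm_conj] at this
        simp [tfWeights] at this; linarith
      have hA2 : ‖(G 2 0 + G 2 1)‖ ≤ 2/3 := by
        have := hb 2; rw [hi2] at this
        simp only [Complex.norm_conj] at this
        simp [tfWeights] at this; linarith
      have hA3 : ‖(G 3 0 - G 3 1)‖ ≤ 2/3 := by
        have := hb 3; rw [hi3] at this
        simp only [Complex.norm_conj] at this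
        simp [tfWeights] at this; linarith
      -- trace identity
      have htr : G 0 0 + G 1 1 + (G 2 0 + G 2 1) + (G 3 0 - G 3 1) = 2 := by
        linear_combination E1 + E4
      have hre : (G 0 0).re + (G 1 1).re + (G 2 0 + G 2 1).re + (G 3 0 - G 3 1).re = 2 := by
        have := congrArg Complex.re htr
        simpa using this
      have hr0 : (G 0 0).re ≤ ‖(G 0 0)‖ := Complex.re_le_norm _
      have hr1 : (G 1 1).re ≤ ‖(G 1 1)‖ := Complex.re_le_norm _
      have hr2 : (G 2 0 + G 2 1).re ≤ ‖(G 2 0 + G 2 1)‖ := Complex.re_le_norm _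
      have hr3 : (G 3 0 - G 3 1).re ≤ ‖(G 3 0 - G 3 1)‖ := Complex.re_le_norm _
      have h0 : G 0 0 = 1/3 := by
        have := tf_eq_of_abs_le hA0 (by linarith : (1/3:ℝ) ≤ (G 0 0).re)
        rw [this]; norm_num
      have h1 : G 1 1 = 1/3 := by
        have := tf_eq_of_abs_le hA1 (by linarith : (1/3:ℝ) ≤ (G 1 1).re)
        rw [this]; norm_num
      have h2 : G 2 0 + G 2 1 = 2/3 := by
        have := tf_eq_of_abs_le hA2 (by linarith : (2/3:ℝ) ≤ (G 2 0 + G 2 1).re)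
        rw [this]; norm_num
      have h3 : G 3 0 - G 3 1 = 2/3 := by
        have := tf_eq_of_abs_le hA3 (by linarith : (2/3:ℝ) ≤ (G 3 0 - G 3 1).re)
        rw [this]; norm_num
      refine ⟨G 2 1 - 1/3, ?_⟩
      funext i
      fin_cases i <;> ext j <;> fin_cases j <;>
        simp only [tfOptDual] <;> simp
      all_goals first
        | linear_combination h0
        | linear_combination h1
        | linear_combination h2
        | linear_combination E2 + E4 - h1
        | linear_combination E3 + E1 - h0 - 2*h2
        | linear_combination E1 - h0 - h2
        | linear_combination h1 - E4
    · rintro ⟨w, rfl⟩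
      refine ⟨tf_dual w, ?_⟩
      have hc1 : (⨆ i, tfWeights i * ‖(inner ℂ (tfOptDual w i) (tfFrame i) : ℂ)‖)
          = ⨆ _ : Fin 4, (1:ℝ) := iSup_congr (tf_const w)
      rw [hc1]
      exact ciSup_const
  refine ⟨key, ?_⟩
  intro hc
  have hinj : Function.Injective tfOptDual := by
    intro w w' h
    have h2 : tfOptDual w 0 1 = tfOptDual w' 0 1 := by rw [h]
    simp only [tfOptDual] at h2
    simpa using h2
  have hpre : (Set.univ : Set ℂ).Countable := by
    have hsub : Set.range tfOptDual ⊆ {G : Fin 4 → EuclideanSpace ℂ (Fin 2) |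
        (∀ f : EuclideanSpace ℂ (Fin 2), ∑ i, (inner ℂ (tfFrame i) f : ℂ) • G i = f) ∧
        (⨆ i, tfWeights i * ‖(inner ℂ (G i) (tfFrame i) : ℂ)‖) = 1} := by
      rintro _ ⟨w, rfl⟩
      exact (key (tfOptDual w)).mpr ⟨w, rfl⟩
    have := (hc.mono hsub).preimage hinj
    simpa [Set.preimage_range] using this
  exact not_countable_complex hpre
end
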